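/- arXiv:2403.08859 — 2 statements merged into one kernel-verified Lean document; each statement's English description precedes it below -/
import Mathlib

section
/- For a single increment step on an m-bit register, the operator |l+1⟩⟨l| factors as a tensor product: |l+1⟩⟨l| = ⊗_{j=k(l)+1}^{m} (I + (-1)^{bin(l)_j} Z)/2 ⊗ (X - iY)/2 ⊗ ((X + iY)/2)^{⊗ k(l)}, where bin(l)_j is the j-th bit of l and k(l) is the position of the rightmost zero bit in the binary representation of l (with the least significant bits written last). -/
private lemma eq_iff_testBit_lt {m x y : ℕ} (hx : x < 2 ^ m) (hy : y < 2 ^ m) :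
    x = y ↔ ∀ j < m, x.testBit j = y.testBit j := by
  constructor
  · rintro rfl _ _; rfl
  · intro h
    apply Nat.eq_of_testBit_eq
    intro i
    by_cases hi : i < m
    · exact h i hi
    · have hxi : x < 2 ^ i := lt_of_lt_of_le hx (Nat.pow_le_pow_right (by norm_num) (le_of_not_gt hi))
      have hyi : y < 2 ^ i := lt_of_lt_of_le hy (Nat.pow_le_pow_right (by norm_num) (le_of_not_gt hi))
      rw [Nat.testBit_lt_two_pow hxi, Nat.testBit_lt_two_pow hyi]

private lemma succ_testBit (l K : ℕ) (hk1 : ∀ j : ℕ, j < K → Nat.testBit l j = true)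
    (hk2 : Nat.testBit l K = false) (j : ℕ) :
    Nat.testBit (l + 1) j =
      if j < K then false else if j = K then true else Nat.testBit l j := by
  have hmod : l % 2 ^ (K + 1) = 2 ^ K - 1 := by
    apply Nat.eq_of_testBit_eq
    intro i
    rw [Nat.testBit_mod_two_pow, Nat.testBit_two_pow_sub_one]
    rcases lt_trichotomy i K with h | h | h
    · simp [hk1 i h, h, Nat.lt_succ_of_lt h]
    · subst h; simp [hk2]
    · have h1 : ¬ i < K + 1 := by omega
      have h2 : ¬ i < K := by omega
      simp [h1, h2]
  set q := l / 2 ^ (K + 1) with hq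
  have hdecomp : l = 2 ^ (K + 1) * q + (2 ^ K - 1) := by
    rw [← hmod, hq]; exact (Nat.div_add_mod l (2 ^ (K + 1))).symm
  have hpow : (1:ℕ) ≤ 2 ^ K := Nat.one_le_two_pow
  have hsucc : l + 1 = 2 ^ (K + 1) * q + 2 ^ K := by omega
  have hlt : 2 ^ K < 2 ^ (K + 1) := Nat.pow_lt_pow_right (by norm_num) (Nat.lt_succ_self K)
  rcases lt_trichotomy j K with h | h | h
  · have : (l + 1).testBit j = ((l + 1) % 2 ^ (K + 1)).testBit j := by
      rw [Nat.testBit_mod_two_pow]; simp [Nat.lt_succ_of_lt h]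
    rw [this, hsucc, Nat.mul_add_mod, Nat.mod_eq_of_lt hlt, Nat.testBit_two_pow]
    simp [h, Nat.ne_of_gt h]
  · subst h
    have : (l + 1).testBit j = ((l + 1) % 2 ^ (j + 1)).testBit j := by
      rw [Nat.testBit_mod_two_pow]; simp
    rw [this, hsucc, Nat.mul_add_mod, Nat.mod_eq_of_lt hlt, Nat.testBit_two_pow]
    simp
  · have hjj : K + 1 + (j - (K + 1)) = j := by omega
    have hdiv1 : (l + 1) / 2 ^ (K + 1) = q := by
      rw [hsucc, Nat.mul_add_div (Nat.pos_of_ne_zero (by positivity)), Nat.div_eq_of_lt hlt]; omega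
    have h1 : (l + 1).testBit j = q.testBit (j - (K + 1)) := by
      rw [← hjj, ← Nat.testBit_shiftRight, Nat.shiftRight_eq_div_pow, hdiv1, hjj]
    have h2 : l.testBit j = q.testBit (j - (K + 1)) := by
      rw [← hjj, ← Nat.testBit_shiftRight, Nat.shiftRight_eq_div_pow, ← hq, hjj]
    rw [h1, h2]
    simp [Nat.not_lt_of_lt h, Nat.ne_of_gt h]

open Matrix in
/-- Tensor factorization of one increment step on an `m`-bit register:
`|l+1⟩⟨l| = ⊗_{j>k} (I + (-1)^{bin(l)_j} Z)/2 ⊗ (X - iY)/2 ⊗ ((X + iY)/2)^{⊗k}`,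
where `k = k(l)` is the position of the rightmost (least significant) zero bit of
`l`.  The tensor product is realized on `Fin (2^m)` via binary (little-endian)
indexing of the Kronecker product, factor `j` acting on bit `j`. -/
theorem increment_step_factorization (m : ℕ) (l : ℕ) (hl : l < 2 ^ m - 1)
    (k : Fin m) (hk1 : ∀ j : ℕ, j < (k : ℕ) → Nat.testBit l j = true)
    (hk2 : Nat.testBit l (k : ℕ) = false) :
    let X : Matrix (Fin 2) (Fin 2) ℂ := !![0, 1; 1, 0]
    let Y : Matrix (Fin 2) (Fin 2) ℂ := !![0, -Complex.I; Complex.I, 0]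
    let Z : Matrix (Fin 2) (Fin 2) ℂ := !![1, 0; 0, -1]
    let M : Fin m → Matrix (Fin 2) (Fin 2) ℂ := fun j =>
      if (j : ℕ) < (k : ℕ) then (1 / 2 : ℂ) • (X + Complex.I • Y)
      else if j = k then (1 / 2 : ℂ) • (X - Complex.I • Y)
      else (1 / 2 : ℂ) • (1 + (if Nat.testBit l (j : ℕ) then (-1 : ℂ) else 1) • Z)
    ∀ a b : Fin (2 ^ m),
      (if (a : ℕ) = l + 1 ∧ (b : ℕ) = l then (1 : ℂ) else 0) =
        ∏ j : Fin m,
          (M j) (if Nat.testBit (a : ℕ) (j : ℕ) then 1 else 0)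
                (if Nat.testBit (b : ℕ) (j : ℕ) then 1 else 0) := by
  intro X Y Z M a b
  have hsb := succ_testBit l (k : ℕ) hk1 hk2
  have hfac : ∀ j : Fin m,
      (M j) (if Nat.testBit (a : ℕ) (j : ℕ) then 1 else 0)
            (if Nat.testBit (b : ℕ) (j : ℕ) then 1 else 0) =
      if (Nat.testBit (a : ℕ) (j : ℕ) = Nat.testBit (l + 1) (j : ℕ) ∧
          Nat.testBit (b : ℕ) (j : ℕ) = Nat.testBit l (j : ℕ)) then 1 else 0 := by
    intro j
    rcases lt_trichotomy (j : ℕ) (k : ℕ) with h | h | h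
    · have hM : M j = (1 / 2 : ℂ) • (X + Complex.I • Y) := by
        simp only [M]; rw [if_pos h]
      have hla : Nat.testBit (l + 1) (j : ℕ) = false := by rw [hsb]; simp [h]
      have hlb : Nat.testBit l (j : ℕ) = true := hk1 _ h
      rw [hM, hla, hlb]
      cases ha : Nat.testBit (a : ℕ) (j : ℕ) <;> cases hb : Nat.testBit (b : ℕ) (j : ℕ) <;>
        simp [X, Y] <;> ring_nf <;> simp [Complex.I_sq] <;> norm_num
    · have hjk : j = k := Fin.ext h
      have hM : M j = (1 / 2 : ℂ) • (X - Complex.I • Y) := by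
        simp only [M]; rw [if_neg (by omega), if_pos hjk]
      have hla : Nat.testBit (l + 1) (j : ℕ) = true := by rw [hsb]; simp [h]
      have hlb : Nat.testBit l (j : ℕ) = false := h ▸ hk2
      rw [hM, hla, hlb]
      cases ha : Nat.testBit (a : ℕ) (j : ℕ) <;> cases hb : Nat.testBit (b : ℕ) (j : ℕ) <;>
        simp [X, Y] <;> ring_nf <;> simp [Complex.I_sq] <;> norm_num
    · have hM : M j = (1 / 2 : ℂ) •
          (1 + (if Nat.testBit l (j : ℕ) then (-1 : ℂ) else 1) • Z) := by
        have hne : ¬ j = k := fun hh => absurd (congrArg Fin.val hh) (by omega)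
        simp only [M]; rw [if_neg (by omega), if_neg hne]
      have hla : Nat.testBit (l + 1) (j : ℕ) = Nat.testBit l (j : ℕ) := by
        rw [hsb]; simp [Nat.not_lt_of_lt h, Nat.ne_of_gt h]
      rw [hM, hla]
      cases hlj : Nat.testBit l (j : ℕ) <;>
        cases ha : Nat.testBit (a : ℕ) (j : ℕ) <;> cases hb : Nat.testBit (b : ℕ) (j : ℕ) <;>
        simp [Z, Matrix.one_apply] <;> norm_num
  rw [Finset.prod_congr rfl (fun j _ => hfac j), Fintype.prod_boole]
  congr 1
  have ha2 : (a : ℕ) < 2 ^ m := a.isLt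
  have hb2 : (b : ℕ) < 2 ^ m := b.isLt
  have hl1 : l + 1 < 2 ^ m := by have := Nat.one_le_two_pow (n := m); omega
  have hl2 : l < 2 ^ m := by omega
  simp only [eq_iff_iff]
  constructor
  · rintro ⟨h1, h2⟩ j; rw [h1, h2]; exact ⟨rfl, rfl⟩
  · intro h
    refine ⟨(eq_iff_testBit_lt ha2 hl1).mpr ?_, (eq_iff_testBit_lt hb2 hl2).mpr ?_⟩ <;>
      intro j hj
    · exact (h ⟨j, hj⟩).1
    · exact (h ⟨j, hj⟩).2
end

section
/- Let L(0), L(1), ..., L(N) be integers with L(0) = L(N) = 0 and |L(n) - L(n-1)| ≤ 1 for all 1 ≤ n ≤ N, subject additionally to the staggered Gauss-law constraint L(n) - L(n-1) = (σ(n) + (-1)^n)/2 where σ(n) ∈ {-1, +1}. Then |L(n)| ≤ ⌈N/4⌉ for all n (in particular the maximum gauge field magnitude is bounded by roughly N/4). -/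
/-- Staggered Gauss law bound: if `L 0 = L N = 0` and for every `1 ≤ n ≤ N` there is
`σ n ∈ {-1, 1}` with `2·(L n - L (n-1)) = σ n + (-1)^n`, then `|L n| ≤ ⌈N/4⌉` for all
`n ≤ N`. -/
theorem gauss_law_field_bound (N : ℕ) (L : ℕ → ℤ) (σ : ℕ → ℤ)
    (h0 : L 0 = 0) (hN : L N = 0)
    (hσ : ∀ n, 1 ≤ n → n ≤ N → σ n = 1 ∨ σ n = -1)
    (hstep : ∀ n, 1 ≤ n → n ≤ N → 2 * (L n - L (n - 1)) = σ n + (-1 : ℤ) ^ n) :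
    ∀ n ≤ N, |L n| ≤ ((N + 3) / 4 : ℕ) := by
  -- classify each step
  have key : ∀ n, 1 ≤ n → n ≤ N →
      (Even n ∧ (L n = L (n-1) ∨ L n = L (n-1) + 1)) ∨
      (Odd n ∧ (L n = L (n-1) ∨ L n = L (n-1) - 1)) := by
    intro n h1 h2
    have hs := hstep n h1 h2
    rcases Nat.even_or_odd n with he | ho
    · rw [he.neg_one_pow] at hs
      exact Or.inl ⟨he, by rcases hσ n h1 h2 with h | h <;> rw [h] at hs <;> omega⟩
    · rw [ho.neg_one_pow] at hs
      exact Or.inr ⟨ho, by rcases hσ n h1 h2 with h | h <;> rw [h] at hs <;> omega⟩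
  -- forward bounds
  have fwd : ∀ n ≤ N, L n ≤ ((n / 2 : ℕ) : ℤ) ∧ -(((n + 1) / 2 : ℕ) : ℤ) ≤ L n := by
    intro n hn
    induction n with
    | zero => simp [h0]
    | succ m ih =>
      have ihm := ih (by omega)
      have hk := key (m + 1) (by omega) hn
      have hm : m + 1 - 1 = m := rfl
      rw [hm] at hk
      rcases hk with ⟨⟨k, hk⟩, h⟩ | ⟨⟨k, hk⟩, h⟩ <;> omega
  -- backward bounds
  have bwd : ∀ k, ∀ n, n + k = N →
      L n ≤ (((N + 1) / 2 : ℕ) : ℤ) - (((n + 1) / 2 : ℕ) : ℤ) ∧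
      -L n ≤ ((N / 2 : ℕ) : ℤ) - ((n / 2 : ℕ) : ℤ) := by
    intro k
    induction k with
    | zero => intro n hn; simp only [Nat.add_zero] at hn; subst hn; simp [hN]
    | succ m ih =>
      intro n hn
      have ihm := ih (n + 1) (by omega)
      have hk := key (n + 1) (by omega) (by omega)
      have hm : n + 1 - 1 = n := rfl
      rw [hm] at hk
      have h1 : ((n + 1 + 1) / 2 : ℕ) = (n / 2 : ℕ) + 1 := by omega
      rcases hk with ⟨⟨k, hk⟩, h⟩ | ⟨⟨k, hk⟩, h⟩ <;> omega
  intro n hn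
  have h1 := fwd n hn
  have h2 := bwd (N - n) n (by omega)
  rw [abs_le]
  omega
end
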